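/- arXiv:2209.07375 — 10 statements merged into one kernel-verified Lean document; each statement's English description precedes it below -/
import Mathlib

section
/- Let T and W be the two coordinate projections under the product P of Gaussian measures N(ν,γ²) and N(μ,σ²) on ℝ×ℝ, and let S = βT + (1−β)W with β ∈ (0,1). Then the conditional expectation of W given the σ-algebra generated by S satisfies, P-almost everywhere, E[W | σ(S)] = μ + ((1−β)σ² / (β²γ² + (1−β)²σ²)) · (S − (βν + (1−β)μ)). -/
/-!
Put `a = Cov(W, S) / Var(S)`. The residual `W - a S` is uncorrelated with `S` by the choice of
`a`, and `(W - a S, S)` is a linear image of the Gaussian vector `(T, W)`, hence jointly Gaussian;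
so the residual is independent of `S`. Therefore `E[W | S] = a S + E[W - a S]`, and it remains
to compute the means, the variance of `S` and `Cov(W, S)` under the product measure.
-/

open MeasureTheory ProbabilityTheory
open scoped NNReal

namespace ProbabilityTheory.HasGaussianLaw

variable {Ω : Type*} {mΩ : MeasurableSpace Ω} {P : Measure Ω} {X Y : Ω → ℝ}

lemma fst_sub_const_mul_snd (hXY : HasGaussianLaw (fun ω ↦ (X ω, Y ω)) P) (a : ℝ) :
    HasGaussianLaw (fun ω ↦ (X ω - a * Y ω, Y ω)) P := by
  simpa using hXY.map_fun ((ContinuousLinearMap.fst ℝ ℝ ℝ - a • ContinuousLinearMap.snd ℝ ℝ ℝ).prod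
    (ContinuousLinearMap.snd ℝ ℝ ℝ))

lemma covariance_sub_mul_eq_zero (hXY : HasGaussianLaw (fun ω ↦ (X ω, Y ω)) P)
    (hvar : Var[Y; P] ≠ 0) :
    cov[fun ω ↦ X ω - cov[X, Y; P] / Var[Y; P] * Y ω, Y; P] = 0 := by
  have := hXY.isProbabilityMeasure
  rw [covariance_fun_sub_left hXY.fst.memLp_two (hXY.snd.memLp_two.const_mul _) hXY.snd.memLp_two,
    covariance_const_mul_left, covariance_self hXY.snd.aemeasurable]
  field_simp
  ring

theorem condExp_comap_ae_eq (hXY : HasGaussianLaw (fun ω ↦ (X ω, Y ω)) P)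
    (hX : Measurable X) (hY : Measurable Y) (hvar : Var[Y; P] ≠ 0) :
    P[X | MeasurableSpace.comap Y inferInstance] =ᵐ[P]
      fun ω ↦ P[X] + cov[X, Y; P] / Var[Y; P] * (Y ω - P[Y]) := by
  have := hXY.isProbabilityMeasure
  set a := cov[X, Y; P] / Var[Y; P]
  set R := fun ω ↦ X ω - a * Y ω
  have hR : Measurable R := hX.sub (hY.const_mul a)
  have hRint : Integrable R P := (hXY.fst_sub_const_mul_snd a).fst.integrable
  have haYint : Integrable (fun ω ↦ a * Y ω) P := hXY.snd.integrable.const_mul a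
  have hindep : IndepFun R Y P := (hXY.fst_sub_const_mul_snd a).indepFun_of_covariance_eq_zero
    (hXY.covariance_sub_mul_eq_zero hvar)
  have haY_meas : StronglyMeasurable[MeasurableSpace.comap Y inferInstance] (fun ω ↦ a * Y ω) :=
    ((comap_measurable Y).const_mul a).stronglyMeasurable
  have hsplit : X = (fun ω ↦ a * Y ω) + R := by ext ω; simp [R]
  calc P[X | MeasurableSpace.comap Y inferInstance]
      =ᵐ[P] P[fun ω ↦ a * Y ω | MeasurableSpace.comap Y inferInstance]
        + P[R | MeasurableSpace.comap Y inferInstance] := by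
        rw [hsplit]
        exact condExp_add haYint hRint _
    _ =ᵐ[P] (fun ω ↦ a * Y ω) + fun _ ↦ P[R] := by
        rw [condExp_of_stronglyMeasurable hY.comap_le haY_meas haYint]
        exact Filter.EventuallyEq.rfl.add (condExp_indep_eq hR.comap_le hY.comap_le
          (comap_measurable R).stronglyMeasurable hindep)
    _ = fun ω ↦ P[X] + a * (Y ω - P[Y]) := by
        ext ω
        simp only [R, Pi.add_apply]
        rw [integral_sub hXY.fst.integrable haYint, integral_const_mul]
        ring

end ProbabilityTheory.HasGaussianLaw

section ProdMoments

variable {μ₁ μ₂ : Measure ℝ} [IsProbabilityMeasure μ₁] [IsProbabilityMeasure μ₂]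

lemma integral_linear_comb_prod (h₁ : Integrable id μ₁) (h₂ : Integrable id μ₂) (a b : ℝ) :
    ∫ p, a * p.1 + b * p.2 ∂μ₁.prod μ₂ = a * ∫ x, x ∂μ₁ + b * ∫ y, y ∂μ₂ := by
  have h₁' : Integrable (fun p : ℝ × ℝ ↦ p.1) (μ₁.prod μ₂) := h₁.comp_fst μ₂
  have h₂' : Integrable (fun p : ℝ × ℝ ↦ p.2) (μ₁.prod μ₂) := h₂.comp_snd μ₁
  rw [integral_add (h₁'.const_mul a) (h₂'.const_mul b), integral_const_mul, integral_const_mul,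
    integral_fun_fst (fun x ↦ x), integral_fun_snd (fun y ↦ y)]
  simp

lemma variance_linear_comb_prod (h₁ : MemLp id 2 μ₁) (h₂ : MemLp id 2 μ₂) (a b : ℝ) :
    Var[fun p ↦ a * p.1 + b * p.2; μ₁.prod μ₂] = a ^ 2 * Var[id; μ₁] + b ^ 2 * Var[id; μ₂] := by
  rw [variance_add_prod (X := fun x ↦ a * x) (Y := fun y ↦ b * y) (h₁.const_mul a)
    (h₂.const_mul b), variance_const_mul, variance_const_mul]
  rfl

lemma covariance_snd_linear_comb_prod (h₁ : MemLp id 2 μ₁) (h₂ : MemLp id 2 μ₂) (a b : ℝ) :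
    cov[fun p ↦ p.2, fun p ↦ a * p.1 + b * p.2; μ₁.prod μ₂] = b * Var[id; μ₂] := by
  have h₁' : MemLp (fun p : ℝ × ℝ ↦ p.1) 2 (μ₁.prod μ₂) := h₁.comp_fst μ₂
  have h₂' : MemLp (fun p : ℝ × ℝ ↦ p.2) 2 (μ₁.prod μ₂) := h₂.comp_snd μ₁
  rw [show (fun p : ℝ × ℝ ↦ a * p.1 + b * p.2) = (fun p ↦ a * p.1) + (fun p ↦ b * p.2) from rfl,
    covariance_add_right h₂' (h₁'.const_mul a) (h₂'.const_mul b),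
    covariance_const_mul_right, covariance_const_mul_right, covariance_comm,
    show cov[fun p ↦ p.1, fun p ↦ p.2; μ₁.prod μ₂] = 0 from covariance_fst_snd_prod h₁ h₂,
    covariance_self measurable_snd.aemeasurable,
    show Var[Prod.snd; μ₁.prod μ₂] = Var[id; μ₂] from
      measurePreserving_snd.variance_fun_comp measurable_id.aemeasurable]
  ring

end ProdMoments

theorem condexp_wealth_given_score_general
    (ν μ γ σ : ℝ) (hγ : 0 < γ) (β : ℝ) (hβ : β ∈ Set.Ioo (0 : ℝ) 1)
    (P : Measure (ℝ × ℝ))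
    (hP : P = (gaussianReal ν (γ ^ 2).toNNReal).prod (gaussianReal μ (σ ^ 2).toNNReal))
    (T W S : ℝ × ℝ → ℝ)
    (hT : T = fun p => p.1) (hW : W = fun p => p.2)
    (hS : S = fun p => β * T p + (1 - β) * W p) :
    P[W | MeasurableSpace.comap S Real.measurableSpace]
      =ᵐ[P] fun p =>
        μ + ((1 - β) * σ ^ 2 / (β ^ 2 * γ ^ 2 + (1 - β) ^ 2 * σ ^ 2))
          * (S p - (β * ν + (1 - β) * μ)) := by
  subst hT hW hS hP
  have hLp (m : ℝ) (v : ℝ≥0) : MemLp id 2 (gaussianReal m v) := memLp_id_gaussianReal 2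
  have hvar := variance_linear_comb_prod (hLp ν (γ ^ 2).toNNReal) (hLp μ (σ ^ 2).toNNReal) β (1 - β)
  have hcov :=
    covariance_snd_linear_comb_prod (hLp ν (γ ^ 2).toNNReal) (hLp μ (σ ^ 2).toNNReal) β (1 - β)
  simp only [variance_id_gaussianReal, Real.coe_toNNReal _ (sq_nonneg γ),
    Real.coe_toNNReal _ (sq_nonneg σ)] at hvar hcov
  have hvar_pos : 0 < β ^ 2 * γ ^ 2 + (1 - β) ^ 2 * σ ^ 2 := by
    have := hβ.1
    positivity
  have hpair : HasGaussianLaw (fun p : ℝ × ℝ ↦ (p.2, β * p.1 + (1 - β) * p.2))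
      ((gaussianReal ν (γ ^ 2).toNNReal).prod (gaussianReal μ (σ ^ 2).toNNReal)) := by
    simpa using IsGaussian.hasGaussianLaw_id.map_fun ((ContinuousLinearMap.snd ℝ ℝ ℝ).prod
      (β • ContinuousLinearMap.fst ℝ ℝ ℝ + (1 - β) • ContinuousLinearMap.snd ℝ ℝ ℝ))
  refine (hpair.condExp_comap_ae_eq measurable_snd (by fun_prop) (hvar ▸ hvar_pos.ne')).trans
    (ae_of_all _ fun p ↦ ?_)
  rw [hvar, hcov, integral_fun_snd (fun y : ℝ ↦ y), integral_linear_comb_prod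
    ((hLp _ _).integrable one_le_two) ((hLp _ _).integrable one_le_two)]
  simp [integral_id_gaussianReal]

/-- conditional expectation of wealth `W` given the σ-algebra generated by the
score `S = βT + (1-β)W`, where `T, W` are the coordinates under the product of Gaussians. -/
theorem condexp_wealth_given_score
    (ν μ γ σ : ℝ) (hγ : 0 < γ) (hσ : 0 < σ) (β : ℝ) (hβ : β ∈ Set.Ioo (0 : ℝ) 1)
    (P : Measure (ℝ × ℝ))
    (hP : P = (gaussianReal ν (γ ^ 2).toNNReal).prod (gaussianReal μ (σ ^ 2).toNNReal))
    (T W S : ℝ × ℝ → ℝ)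
    (hT : T = fun p => p.1) (hW : W = fun p => p.2)
    (hS : S = fun p => β * T p + (1 - β) * W p) :
    P[W | MeasurableSpace.comap S Real.measurableSpace]
      =ᵐ[P] fun p =>
        μ + ((1 - β) * σ ^ 2 / (β ^ 2 * γ ^ 2 + (1 - β) ^ 2 * σ ^ 2))
          * (S p - (β * ν + (1 - β) * μ)) :=
  condexp_wealth_given_score_general ν μ γ σ hγ β hβ P hP T W S hT hW hS
end

section
/- If (1−α)·√(γ² + σ²) < √(2π)·(αγ² + (1−α)σ²), then the wealth-update map f has exactly one fixed point in ℝ (f is a contraction and admits a unique x with f(x) = x). -/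
/-!
The Gaussian density is bounded by its value `(√(2π))⁻¹` at `0`, so `Φ` is `(√(2π))⁻¹`-Lipschitz
and `f` is Lipschitz with constant `(1 - α) K / √(2π)`. The hypothesis says exactly that this
constant is `< 1`, and Banach's fixed-point theorem on the complete space `ℝ` concludes.
-/

open Real MeasureTheory NNReal

lemma integrable_gaussian_density :
    Integrable fun t : ℝ => (√(2 * π))⁻¹ * exp (-t ^ 2 / 2) := by
  simpa [ProbabilityTheory.gaussianPDFReal_def] using
    ProbabilityTheory.integrable_gaussianPDFReal 0 1

lemma gaussian_density_le (t : ℝ) : (√(2 * π))⁻¹ * exp (-t ^ 2 / 2) ≤ (√(2 * π))⁻¹ := by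
  refine mul_le_of_le_one_right (by positivity) (exp_le_one_iff.2 ?_)
  nlinarith [sq_nonneg t]

lemma lipschitzWith_integral_Iic {g : ℝ → ℝ} {M : ℝ≥0} (hg : Integrable g)
    (hM : ∀ t, ‖g t‖ ≤ M) : LipschitzWith M fun u => ∫ t in Set.Iic u, g t := by
  refine LipschitzWith.of_dist_le_mul fun u v => ?_
  rw [dist_eq_norm, intervalIntegral.integral_Iic_sub_Iic hg.integrableOn hg.integrableOn,
    Real.dist_eq]
  exact intervalIntegral.norm_integral_le_of_norm_le_const fun t _ => hM t

lemma contractingWith_const_sub_comp_affine {Φ : ℝ → ℝ} {L : ℝ≥0} (hΦ : LipschitzWith L Φ)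
    (c a b : ℝ) (h : L * ‖a‖₊ < 1) :
    ContractingWith (L * ‖a‖₊) fun x => c - Φ (a * x + b) := by
  refine ⟨h, LipschitzWith.of_dist_le_mul fun x y => ?_⟩
  calc dist (c - Φ (a * x + b)) (c - Φ (a * y + b))
      = dist (Φ (a * x + b)) (Φ (a * y + b)) := dist_sub_left _ _ _
    _ ≤ L * dist (a * x + b) (a * y + b) := hΦ.dist_le_mul _ _
    _ = L * ‖a‖₊ * dist x y := by
      rw [dist_add_right, dist_eq_norm, ← mul_sub, norm_mul, ← dist_eq_norm]
      push_cast
      ring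

lemma ContractingWith.existsUnique_fixedPoint {α : Type*} [MetricSpace α] [Nonempty α]
    [CompleteSpace α] {K : ℝ≥0} {f : α → α} (hf : ContractingWith K f) : ∃! x, f x = x :=
  ⟨hf.fixedPoint f, hf.fixedPoint_isFixedPt, fun _ hy => hf.fixedPoint_unique hy⟩

theorem unique_fixed_point_of_contraction_general
    (γ σ C α : ℝ) (hα : α ∈ Set.Ico (0 : ℝ) 1)
    (Φ : ℝ → ℝ)
    (hΦ : ∀ u, Φ u = ∫ t in Set.Iic u, (Real.sqrt (2 * π))⁻¹ * Real.exp (-t ^ 2 / 2))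
    (K : ℝ) (hK : K = Real.sqrt (γ ^ 2 + σ ^ 2) / (α * γ ^ 2 + (1 - α) * σ ^ 2))
    (f : ℝ → ℝ) (hf : f = fun x => 1 - Φ (K * (C - (1 - α) * x)))
    (hcontr : (1 - α) * Real.sqrt (γ ^ 2 + σ ^ 2)
        < Real.sqrt (2 * π) * (α * γ ^ 2 + (1 - α) * σ ^ 2)) :
    ∃! x : ℝ, f x = x := by
  have hα1 : 0 < 1 - α := sub_pos.2 hα.2
  -- the left side of `hcontr` is nonnegative, which forces the denominator of `K` to be positive
  have hD : 0 < α * γ ^ 2 + (1 - α) * σ ^ 2 :=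
    pos_of_mul_pos_right (lt_of_le_of_lt (by positivity) hcontr) (sqrt_nonneg _)
  have hK0 : 0 ≤ K := hK ▸ div_nonneg (sqrt_nonneg _) hD.le
  have hΦ_lip : LipschitzWith (⟨(√(2 * π))⁻¹, by positivity⟩ : ℝ≥0) Φ := by
    rw [show Φ = _ from funext hΦ]
    refine lipschitzWith_integral_Iic integrable_gaussian_density fun t => ?_
    rw [Real.norm_of_nonneg (by positivity)]
    exact gaussian_density_le t
  have hf_affine : f = fun x => 1 - Φ (-(K * (1 - α)) * x + K * C) := by
    rw [hf]
    ext x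
    ring_nf
  rw [hf_affine]
  refine (contractingWith_const_sub_comp_affine hΦ_lip _ _ _ ?_).existsUnique_fixedPoint
  rw [← NNReal.coe_lt_coe]
  change (√(2 * π))⁻¹ * ‖-(K * (1 - α))‖ < 1
  rw [norm_neg, Real.norm_of_nonneg (mul_nonneg hK0 hα1.le), hK, inv_mul_lt_iff₀ (by positivity),
    div_mul_eq_mul_div, div_lt_iff₀ hD]
  linarith

/-- if `(1-α)√(γ²+σ²) < √(2π)(αγ² + (1-α)σ²)` then the wealth-update map
`f(x) = 1 - Φ(K(C - (1-α)x))` is a contraction and has exactly one fixed point. -/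
theorem unique_fixed_point_of_contraction
    (γ σ C α : ℝ) (hγ : 0 < γ) (hσ : 0 < σ) (hα : α ∈ Set.Ico (0 : ℝ) 1)
    (Φ : ℝ → ℝ)
    (hΦ : ∀ u, Φ u = ∫ t in Set.Iic u, (Real.sqrt (2 * π))⁻¹ * Real.exp (-t ^ 2 / 2))
    (K : ℝ) (hK : K = Real.sqrt (γ ^ 2 + σ ^ 2) / (α * γ ^ 2 + (1 - α) * σ ^ 2))
    (f : ℝ → ℝ) (hf : f = fun x => 1 - Φ (K * (C - (1 - α) * x)))
    (hcontr : (1 - α) * Real.sqrt (γ ^ 2 + σ ^ 2)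
        < Real.sqrt (2 * π) * (α * γ ^ 2 + (1 - α) * σ ^ 2)) :
    ∃! x : ℝ, f x = x :=
  unique_fixed_point_of_contraction_general γ σ C α hα Φ hΦ K hK f hf hcontr
end

section
/- The set of fixed points of the wealth-update map f, {x ∈ ℝ | f(x) = x}, has at most 3 elements. -/
open Real Set MeasureTheory

/-!
Fixed points of `f` are the zeros of `F x = f x - x`. Its derivative is
`K (1 - α) φ(K (C - (1 - α) x)) - 1` with `φ` the Gaussian density; it vanishes only where
`φ` takes one particular value, hence where the affine argument is `± y₀`: at most two points.
By Rolle's theorem a zero of `F'` lies strictly between any two zeros of `F`, so `F` has at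
most three zeros.
-/

theorem hasDerivAt_integral_Iic {g : ℝ → ℝ} (hg : Integrable g) (hcont : Continuous g)
    (u : ℝ) :
    HasDerivAt (fun v => ∫ t in Iic v, g t) (g u) u := by
  have hsplit : (fun v => ∫ t in Iic v, g t) =
      fun v => (∫ t in Iic 0, g t) + ∫ t in (0 : ℝ)..v, g t := by
    funext v
    rw [← intervalIntegral.integral_Iic_sub_Iic hg.integrableOn hg.integrableOn]
    ring
  rw [hsplit]
  exact (intervalIntegral.integral_hasDerivAt_right (hcont.intervalIntegrable 0 u)
    hcont.stronglyMeasurable.stronglyMeasurableAtFilter hcont.continuousAt).const_add _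

theorem card_le_card_add_one_of_hasDerivAt {F F' : ℝ → ℝ} (hF : ∀ x, HasDerivAt F (F' x) x)
    {s t : Finset ℝ} (hs : ∀ x ∈ s, F x = 0) (ht : ∀ x, F' x = 0 → x ∈ t) :
    s.card ≤ t.card + 1 :=
  Finset.card_le_of_interleaved fun x hx y hy hxy _ => by
    obtain ⟨z, hz, hz0⟩ := exists_hasDerivAt_eq_zero hxy
      (fun w _ => (hF w).continuousAt.continuousWithinAt) ((hs x hx).trans (hs y hy).symm)
      (fun w _ => hF w)
    exact ⟨z, ht z hz0, hz⟩

theorem exists_finset_card_le_of_hasDerivAt {F F' : ℝ → ℝ} (hF : ∀ x, HasDerivAt F (F' x) x)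
    {t : Finset ℝ} (ht : ∀ x, F' x = 0 → x ∈ t) :
    ∃ s : Finset ℝ, s.card ≤ t.card + 1 ∧ ∀ x, F x = 0 → x ∈ s := by
  have hfin : {x | F x = 0}.Finite := by
    by_contra hinf
    obtain ⟨s, hsub, hcard⟩ := Set.Infinite.exists_subset_card_eq hinf (t.card + 2)
    have := card_le_card_add_one_of_hasDerivAt hF (fun x hx => hsub hx) ht
    omega
  exact ⟨hfin.toFinset, card_le_card_add_one_of_hasDerivAt hF (by simp) ht, by simp⟩

theorem sq_eq_two_mul_log_of_mul_exp_eq_one {a y : ℝ} (h : a * exp (-y ^ 2 / 2) = 1) :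
    y ^ 2 = 2 * log a := by
  have hexp : exp (-y ^ 2 / 2) = a⁻¹ := eq_inv_of_mul_eq_one_right h
  have : log a⁻¹ = -y ^ 2 / 2 := by rw [← hexp, log_exp]
  rw [log_inv] at this
  linarith

theorem mem_pair_of_add_mul_sq_eq {a b L x : ℝ} (hb : b ≠ 0) (h : (a + b * x) ^ 2 = L) :
    x ∈ ({(√L - a) / b, (-√L - a) / b} : Finset ℝ) := by
  have hL : (a + b * x) ^ 2 = √L ^ 2 := by rw [sq_sqrt (h ▸ sq_nonneg _), h]
  rw [Finset.mem_insert, Finset.mem_singleton, eq_div_iff hb, eq_div_iff hb]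
  rcases sq_eq_sq_iff_eq_or_eq_neg.mp hL with h' | h'
  · left; linarith
  · right; linarith

theorem at_most_three_fixed_points_general
    (C α : ℝ)
    (Φ : ℝ → ℝ)
    (hΦ : ∀ u, Φ u = ∫ t in Set.Iic u, (Real.sqrt (2 * π))⁻¹ * Real.exp (-t ^ 2 / 2))
    (K : ℝ)
    (f : ℝ → ℝ) (hf : f = fun x => 1 - Φ (K * (C - (1 - α) * x))) :
    ∃ s : Finset ℝ, s.card ≤ 3 ∧ ∀ x : ℝ, f x = x → x ∈ s := by
  subst hf
  set φ : ℝ → ℝ := fun t => (√(2 * π))⁻¹ * exp (-t ^ 2 / 2)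
  have hΦ' : ∀ u, HasDerivAt Φ (φ u) u := by
    rw [funext hΦ]
    refine hasDerivAt_integral_Iic ?_ (by fun_prop)
    refine ((integrable_exp_neg_mul_sq one_half_pos).const_mul (√(2 * π))⁻¹).congr ?_
    filter_upwards with t
    ring_nf
  have hF : ∀ x, HasDerivAt (fun x => 1 - Φ (K * (C - (1 - α) * x)) - x)
      (K * (1 - α) * φ (K * C + -(K * (1 - α)) * x) - 1) x := by
    intro x
    have harg : HasDerivAt (fun x => K * (C - (1 - α) * x)) (-(K * (1 - α))) x :=
      ((((hasDerivAt_id' x).const_mul (1 - α)).const_sub C).const_mul K).congr_deriv (by ring)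
    refine (((hΦ' _).comp x harg).const_sub 1 |>.sub (hasDerivAt_id' x)).congr_deriv ?_
    ring_nf
  obtain ⟨s, hs, hzero⟩ := exists_finset_card_le_of_hasDerivAt hF fun x hx => by
    have hone :
        K * (1 - α) * (√(2 * π))⁻¹ * exp (-(K * C + -(K * (1 - α)) * x) ^ 2 / 2) = 1 := by
      simp only [φ] at hx; linarith
    -- a zero slope would make `F' ≡ -1`
    refine mem_pair_of_add_mul_sq_eq (fun hb => ?_) (sq_eq_two_mul_log_of_mul_exp_eq_one hone)
    simp [neg_eq_zero.mp hb] at hone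
  exact ⟨s, hs.trans (by grw [Finset.card_le_two]), fun x hx => hzero x (sub_eq_zero.mpr hx)⟩

/-- the wealth-update map `f(x) = 1 - Φ(K(C - (1-α)x))` has at most three
fixed points. -/
theorem at_most_three_fixed_points
    (γ σ C α : ℝ) (hγ : 0 < γ) (hσ : 0 < σ) (hα : α ∈ Set.Ico (0 : ℝ) 1)
    (Φ : ℝ → ℝ)
    (hΦ : ∀ u, Φ u = ∫ t in Set.Iic u, (Real.sqrt (2 * π))⁻¹ * Real.exp (-t ^ 2 / 2))
    (K : ℝ) (hK : K = Real.sqrt (γ ^ 2 + σ ^ 2) / (α * γ ^ 2 + (1 - α) * σ ^ 2))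
    (f : ℝ → ℝ) (hf : f = fun x => 1 - Φ (K * (C - (1 - α) * x))) :
    ∃ s : Finset ℝ, s.card ≤ 3 ∧ ∀ x : ℝ, f x = x → x ∈ s :=
  at_most_three_fixed_points_general C α Φ hΦ K f hf
end

section
/- Suppose x* ∈ ℝ is a fixed point of the wealth-update map f at which the derivative of f exceeds 1 (i.e., f(x*) = x* and f'(x*) > 1). Then there exist two further fixed points a and b of f with a < x* < b; in particular f has three distinct fixed points. -/
open Real MeasureTheory

/-- if `x*` is a fixed point of the wealth-update map `f` at which the derivative
`f'(x*) = (1-α)·K·φ(K(C-(1-α)x*))` exceeds 1, then there are two further fixed points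
`a < x* < b`, so `f` has three distinct fixed points. -/
theorem three_fixed_points_of_repelling_fixed_point
    (γ σ C α : ℝ) (hγ : 0 < γ) (hσ : 0 < σ) (hα : α ∈ Set.Ico (0 : ℝ) 1)
    (Φ φ : ℝ → ℝ)
    (hΦ : ∀ u, Φ u = ∫ t in Set.Iic u, (Real.sqrt (2 * π))⁻¹ * Real.exp (-t ^ 2 / 2))
    (hφ : ∀ u, φ u = (Real.sqrt (2 * π))⁻¹ * Real.exp (-u ^ 2 / 2))
    (K : ℝ) (hK : K = Real.sqrt (γ ^ 2 + σ ^ 2) / (α * γ ^ 2 + (1 - α) * σ ^ 2))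
    (f : ℝ → ℝ) (hf : f = fun x => 1 - Φ (K * (C - (1 - α) * x)))
    (xstar : ℝ) (hfix : f xstar = xstar)
    (hderiv : (1 - α) * K * φ (K * (C - (1 - α) * xstar)) > 1) :
    ∃ a b : ℝ, f a = a ∧ f b = b ∧ a < xstar ∧ xstar < b := by
  obtain ⟨hα0, hα1⟩ := hα
  set ρ : ℝ → ℝ := fun t => (Real.sqrt (2 * π))⁻¹ * Real.exp (-t ^ 2 / 2) with hρdef
  have hρcont : Continuous ρ := by
    apply Continuous.mul continuous_const
    exact Real.continuous_exp.comp (by continuity)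
  have hρnn : ∀ t, 0 ≤ ρ t := fun t => by positivity
  have hρint : Integrable ρ := by
    have h1 : Integrable (fun t : ℝ => Real.exp (-(1/2 : ℝ) * t ^ 2)) :=
      integrable_exp_neg_mul_sq (by norm_num)
    have h2 := h1.const_mul (Real.sqrt (2 * π))⁻¹
    refine h2.congr (Filter.Eventually.of_forall fun t => ?_)
    simp only [hρdef]
    congr 1
    ring
  set I := ∫ t, ρ t with hIdef
  have hΦle : ∀ u, Φ u ≤ I := by
    intro u
    rw [hΦ u]
    exact setIntegral_le_integral hρint (Filter.Eventually.of_forall hρnn)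
  have hΦnn : ∀ u, 0 ≤ Φ u := by
    intro u; rw [hΦ u]
    exact setIntegral_nonneg measurableSet_Iic fun t _ => hρnn t
  -- derivative of Φ
  have hΦd : ∀ u, HasDerivAt Φ (ρ u) u := by
    intro u
    have key : ∀ x : ℝ, Φ x = Φ 0 + ∫ t in (0 : ℝ)..x, ρ t := by
      intro x
      have := intervalIntegral.integral_Iic_sub_Iic (μ := volume) (f := ρ) (a := (0:ℝ)) (b := x)
        hρint.integrableOn hρint.integrableOn
      rw [hΦ x, hΦ 0]
      linarith [this]
    have hD : HasDerivAt (fun x => ∫ t in (0 : ℝ)..x, ρ t) (ρ u) u :=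
      intervalIntegral.integral_hasDerivAt_right
        hρint.intervalIntegrable
        (hρcont.stronglyMeasurableAtFilter _ _)
        hρcont.continuousAt
    have : HasDerivAt (fun x => Φ 0 + ∫ t in (0 : ℝ)..x, ρ t) (ρ u) u := hD.const_add _
    exact this.congr_of_eventuallyEq (Filter.Eventually.of_forall fun x => (key x))
  -- derivative of f
  have hfd : ∀ x, HasDerivAt f (ρ (K * (C - (1 - α) * x)) * ((1 - α) * K)) x := by
    intro x
    have hin : HasDerivAt (fun x : ℝ => K * (C - (1 - α) * x)) (K * (-(1 - α))) x := by
      have h1 : HasDerivAt (fun x : ℝ => C - (1 - α) * x) (-(1 - α)) x := by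
        simpa using ((hasDerivAt_id x).const_mul (1 - α)).const_sub C
      exact h1.const_mul K
    have hcomp := (hΦd (K * (C - (1 - α) * x))).comp x hin
    have h2 : HasDerivAt f (-(ρ (K * (C - (1 - α) * x)) * (K * (-(1 - α))))) x := by
      rw [hf]
      exact hcomp.const_sub 1
    convert h2 using 1
    ring
  have hfc : Continuous f :=
    continuous_iff_continuousAt.2 fun x => (hfd x).continuousAt
  -- the function g
  set g : ℝ → ℝ := fun x => f x - x with hgdef
  have hgc : Continuous g := hfc.sub continuous_id
  have hgstar : g xstar = 0 := by simp [hgdef, hfix]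
  set D : ℝ := ρ (K * (C - (1 - α) * xstar)) * ((1 - α) * K) with hDdef
  have hD1 : 1 < D := by
    have := hderiv
    rw [hφ] at this
    have : (1 - α) * K * ρ (K * (C - (1 - α) * xstar)) > 1 := this
    linarith [this, (by ring : (1 - α) * K * ρ (K * (C - (1 - α) * xstar)) = D)]
  have hgd : HasDerivAt g (D - 1) xstar := (hfd xstar).sub (hasDerivAt_id xstar)
  -- slope eventually positive near xstar
  have hslope : Filter.Tendsto (slope g xstar) (nhdsWithin xstar {xstar}ᶜ) (nhds (D - 1)) :=
    hasDerivAt_iff_tendsto_slope.1 hgd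
  have hev : ∀ᶠ y in nhdsWithin xstar {xstar}ᶜ, 0 < slope g xstar y :=
    hslope.eventually (eventually_gt_nhds (by linarith))
  have hgpos_of_slope : ∀ y, xstar < y → 0 < slope g xstar y → 0 < g y := by
    intro y hy hs
    have h1 : slope g xstar y = g y / (y - xstar) := by
      simp [slope_def_field, hgstar]
    rw [h1] at hs
    have := mul_pos hs (by linarith : (0:ℝ) < y - xstar)
    rwa [div_mul_cancel₀ _ (by linarith : y - xstar ≠ 0)] at this
  have hgneg_of_slope : ∀ y, y < xstar → 0 < slope g xstar y → g y < 0 := by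
    intro y hy hs
    have h1 : slope g xstar y = g y / (y - xstar) := by
      simp [slope_def_field, hgstar]
    rw [h1] at hs
    have hneg : y - xstar < 0 := by linarith
    have := mul_neg_of_pos_of_neg hs hneg
    rwa [div_mul_cancel₀ _ (by linarith : y - xstar ≠ 0)] at this
  -- find y > xstar with g y > 0
  have hright : ∃ y, xstar < y ∧ 0 < g y := by
    have hev' : ∀ᶠ y in nhdsWithin xstar (Set.Ioi xstar), 0 < slope g xstar y :=
      hev.filter_mono (nhdsWithin_mono _ fun z hz => ne_of_gt hz)
    obtain ⟨y, hy1, hy2⟩ := (hev'.and self_mem_nhdsWithin).exists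
    exact ⟨y, hy2, hgpos_of_slope y hy2 hy1⟩
  have hleft : ∃ y, y < xstar ∧ g y < 0 := by
    have hev' : ∀ᶠ y in nhdsWithin xstar (Set.Iio xstar), 0 < slope g xstar y :=
      hev.filter_mono (nhdsWithin_mono _ fun z hz => ne_of_lt hz)
    obtain ⟨y, hy1, hy2⟩ := (hev'.and self_mem_nhdsWithin).exists
    exact ⟨y, hy2, hgneg_of_slope y hy2 hy1⟩
  obtain ⟨y, hy, hgy⟩ := hright
  obtain ⟨z, hz, hgz⟩ := hleft
  -- g is negative far right and positive far left
  have hfub : ∀ x, f x ≤ 1 := by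
    intro x; simp only [hf]; linarith [hΦnn (K * (C - (1 - α) * x))]
  have hflb : ∀ x, 1 - I ≤ f x := by
    intro x; simp only [hf]; linarith [hΦle (K * (C - (1 - α) * x))]
  set M : ℝ := max (y + 1) 2 with hM
  have hyM : y ≤ M := le_trans (by linarith) (le_max_left _ _)
  have hgM : g M < 0 := by
    have h1 : f M ≤ 1 := hfub M
    have h2 : (2:ℝ) ≤ M := le_max_right _ _
    simp only [hgdef]; linarith
  set m : ℝ := min (z - 1) (-I) with hm
  have hmz : m ≤ z := le_trans (min_le_left _ _) (by linarith)
  have hgm : 0 < g m := by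
    have h1 : 1 - I ≤ f m := hflb m
    have h2 : m ≤ -I := min_le_right _ _
    simp only [hgdef]; linarith
  -- IVT on both sides
  obtain ⟨b, hbmem, hb⟩ := intermediate_value_Icc' hyM hgc.continuousOn
    (show (0:ℝ) ∈ Set.Icc (g M) (g y) from ⟨le_of_lt hgM, le_of_lt hgy⟩)
  obtain ⟨a, hamem, ha⟩ := intermediate_value_Icc' hmz hgc.continuousOn
    (show (0:ℝ) ∈ Set.Icc (g z) (g m) from ⟨le_of_lt hgz, le_of_lt hgm⟩)
  refine ⟨a, b, ?_, ?_, ?_, ?_⟩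
  · have : f a - a = 0 := ha
    linarith
  · have : f b - b = 0 := hb
    linarith
  · exact lt_of_le_of_lt hamem.2 hz
  · exact lt_of_lt_of_le hy hbmem.1
end

section
/- Suppose γ ≤ σ, C ≥ 0, and x ≥ 0. Then the value f_α(x) = 1 − Φ((C − (1−α)x)·√(γ² + σ²)/(αγ² + (1−α)σ²)) is non-increasing in α on [0,1): for all 0 ≤ α₁ ≤ α₂ < 1, f_{α₂}(x) ≤ f_{α₁}(x). -/
open Real

/-- if `γ ≤ σ`, `C ≥ 0` and `x ≥ 0`, then
`f_α(x) = 1 - Φ((C - (1-α)x)·√(γ²+σ²)/(αγ²+(1-α)σ²))` is non-increasing in `α` on `[0,1)`. -/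
theorem wealth_update_antitone_in_alpha
    (γ σ C x : ℝ) (hγ : 0 < γ) (hσ : 0 < σ)
    (Φ : ℝ → ℝ)
    (hΦ : ∀ u, Φ u = ∫ t in Set.Iic u, (Real.sqrt (2 * π))⁻¹ * Real.exp (-t ^ 2 / 2))
    (f : ℝ → ℝ)
    (hf : f = fun α => 1 - Φ ((C - (1 - α) * x) * Real.sqrt (γ ^ 2 + σ ^ 2)
        / (α * γ ^ 2 + (1 - α) * σ ^ 2)))
    (hγσ : γ ≤ σ) (hC : C ≥ 0) (hx : x ≥ 0) :
    ∀ α₁ α₂ : ℝ, 0 ≤ α₁ → α₁ ≤ α₂ → α₂ < 1 → f α₂ ≤ f α₁ := by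
  intro α₁ α₂ h0 h12 h2
  have hmono : ∀ u v : ℝ, u ≤ v → Φ u ≤ Φ v := by
    intro u v huv
    rw [hΦ u, hΦ v]
    have hint : MeasureTheory.Integrable
        (fun t : ℝ => (Real.sqrt (2 * π))⁻¹ * Real.exp (-t ^ 2 / 2)) := by
      have h := (integrable_exp_neg_mul_sq (by norm_num : (0:ℝ) < 1/2)).const_mul
        ((Real.sqrt (2 * π))⁻¹)
      convert h using 2 with t
      ring_nf
    apply MeasureTheory.setIntegral_mono_set hint.integrableOn
    · filter_upwards with t
      positivity
    · exact HasSubset.Subset.eventuallyLE (Set.Iic_subset_Iic.mpr huv)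
  subst hf
  simp only
  have hD1 : 0 < α₁ * γ ^ 2 + (1 - α₁) * σ ^ 2 := by 
    have h1 : α₁ < 1 := lt_of_le_of_lt h12 h2
    nlinarith [mul_nonneg h0 (sq_nonneg γ), mul_pos (by linarith : (0:ℝ) < 1 - α₁) (pow_pos hσ 2)]
  have hD2 : 0 < α₂ * γ ^ 2 + (1 - α₂) * σ ^ 2 := by 
    have := h0.trans h12
    nlinarith [mul_nonneg this (sq_nonneg γ), mul_pos (by linarith : (0:ℝ) < 1 - α₂) (pow_pos hσ 2)]
  have hK : (0:ℝ) ≤ Real.sqrt (γ ^ 2 + σ ^ 2) := Real.sqrt_nonneg _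
  have harg : (C - (1 - α₁) * x) * Real.sqrt (γ ^ 2 + σ ^ 2) / (α₁ * γ ^ 2 + (1 - α₁) * σ ^ 2)
      ≤ (C - (1 - α₂) * x) * Real.sqrt (γ ^ 2 + σ ^ 2) / (α₂ * γ ^ 2 + (1 - α₂) * σ ^ 2) := by
    rw [div_le_div_iff₀ hD1 hD2]
    have key : 0 ≤ Real.sqrt (γ ^ 2 + σ ^ 2) * ((α₂ - α₁) * (C * (σ ^ 2 - γ ^ 2) + x * γ ^ 2)) := by
      apply mul_nonneg hK
      apply mul_nonneg (by linarith)
      have : 0 ≤ C * (σ ^ 2 - γ ^ 2) := mul_nonneg hC (by nlinarith)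
      nlinarith [sq_nonneg γ]
    nlinarith [key]
  linarith [hmono _ _ harg]
end

section
/- Fix α ∈ (0,1) and for β ∈ [0,1] define K(β) = √(β²γ² + (1−β)²σ²) / (αβγ² + (1−α)(1−β)σ²). Then K(β) ≥ K(α) for every β ∈ [0,1]; consequently, for every real x with (1−α)x < C and every β ∈ [0,1], the β-score wealth update satisfies 1 − Φ((C − (1−α)x)·K(β)) ≤ 1 − Φ((C − (1−α)x)·K(α)). In other words, choosing the score weight β equal to the objective weight α maximizes the wealth update below the inflection point. -/
open Real

/-- for `α ∈ (0,1)` and `K(β) = √(β²γ²+(1-β)²σ²)/(αβγ²+(1-α)(1-β)σ²)`,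
`K(β) ≥ K(α)` for all `β ∈ [0,1]`; hence for `(1-α)x < C` the `β`-score wealth update
`1 - Φ((C-(1-α)x)·K(β))` is maximized at `β = α`. -/
theorem score_weight_alpha_is_optimal
    (γ σ C α : ℝ) (hγ : 0 < γ) (hσ : 0 < σ) (hα : α ∈ Set.Ioo (0 : ℝ) 1)
    (Φ : ℝ → ℝ)
    (hΦ : ∀ u, Φ u = ∫ t in Set.Iic u, (Real.sqrt (2 * π))⁻¹ * Real.exp (-t ^ 2 / 2))
    (K : ℝ → ℝ)
    (hK : ∀ β, K β = Real.sqrt (β ^ 2 * γ ^ 2 + (1 - β) ^ 2 * σ ^ 2)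
        / (α * β * γ ^ 2 + (1 - α) * (1 - β) * σ ^ 2)) :
    (∀ β ∈ Set.Icc (0 : ℝ) 1, K β ≥ K α)
    ∧ ∀ x : ℝ, (1 - α) * x < C → ∀ β ∈ Set.Icc (0 : ℝ) 1,
        1 - Φ ((C - (1 - α) * x) * K β) ≤ 1 - Φ ((C - (1 - α) * x) * K α) := by
  obtain ⟨hα0, hα1⟩ := hα
  set E := α ^ 2 * γ ^ 2 + (1 - α) ^ 2 * σ ^ 2 with hE
  have hEpos : 0 < E := by
    have h1 := mul_pos (pow_pos hα0 2) (pow_pos hγ 2)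
    nlinarith [sq_nonneg ((1 - α) * σ)]
  set M := Real.sqrt E with hMdef
  have hM : 0 < M := Real.sqrt_pos.2 hEpos
  have hM2 : M ^ 2 = E := Real.sq_sqrt hEpos.le
  have hKα : K α = 1 / M := by
    rw [hK]
    have hden : α * α * γ ^ 2 + (1 - α) * (1 - α) * σ ^ 2 = E := by rw [hE]; ring
    have hEM : E = M * M := by nlinarith
    rw [hden, ← hMdef, hEM]
    rw [div_eq_div_iff (mul_pos hM hM).ne' hM.ne']
    ring
  have hKge : ∀ β ∈ Set.Icc (0 : ℝ) 1, K β ≥ K α := by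
    intro β hβ
    obtain ⟨hβ0, hβ1⟩ := hβ
    set A2 := β ^ 2 * γ ^ 2 + (1 - β) ^ 2 * σ ^ 2 with hA2
    set D := α * β * γ ^ 2 + (1 - α) * (1 - β) * σ ^ 2 with hD
    have hA2pos : 0 < A2 := by
      rcases eq_or_lt_of_le hβ0 with h | h
      · rw [hA2, ← h]; nlinarith [pow_pos hσ 2]
      · have := mul_pos (pow_pos h 2) (pow_pos hγ 2)
        nlinarith [sq_nonneg ((1 - β) * σ)]
    have hDpos : 0 < D := by
      rcases eq_or_lt_of_le hβ0 with h | h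
      · rw [hD, ← h]
        nlinarith [mul_pos (sub_pos.2 hα1) (pow_pos hσ 2)]
      · have h1 := mul_pos (mul_pos hα0 h) (pow_pos hγ 2)
        have h2 : 0 ≤ (1 - α) * (1 - β) * σ ^ 2 := by
          apply mul_nonneg (mul_nonneg (by linarith) (by linarith)) (sq_nonneg σ)
        nlinarith
    set A := Real.sqrt A2 with hAdef
    have hA : 0 < A := Real.sqrt_pos.2 hA2pos
    have hA2' : A ^ 2 = A2 := Real.sq_sqrt hA2pos.le
    have hcauchy : D ^ 2 ≤ E * A2 := by
      rw [hD, hE, hA2]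
      nlinarith [sq_nonneg (α * γ * ((1 - β) * σ) - (1 - α) * σ * (β * γ))]
    have hDle : D ≤ M * A := by
      have h' : D ^ 2 ≤ (M * A) ^ 2 := by rw [mul_pow, hM2, hA2']; exact hcauchy
      exact le_of_sq_le_sq h' (by positivity)
    rw [hK, hKα, ge_iff_le, div_le_div_iff₀ hM hDpos, ← hA2, ← hAdef, one_mul, mul_comm]
    exact hDle
  refine ⟨hKge, ?_⟩
  have hmono : Monotone Φ := by
    intro u v huv
    rw [hΦ, hΦ]
    apply MeasureTheory.setIntegral_mono_set
    · apply MeasureTheory.Integrable.integrableOn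
      have heq : (fun t : ℝ => (Real.sqrt (2 * π))⁻¹ * Real.exp (-t ^ 2 / 2)) =
          fun t : ℝ => (Real.sqrt (2 * π))⁻¹ * Real.exp (-(1 / 2) * t ^ 2) := by
        funext t; ring_nf
      rw [heq]
      exact (integrable_exp_neg_mul_sq (by norm_num : (0:ℝ) < 1 / 2)).const_mul _
    · filter_upwards with t
      positivity
    · exact (Set.Iic_subset_Iic.mpr huv).eventuallyLE
  intro x hx β hβ
  have hc : 0 < C - (1 - α) * x := by linarith
  have : (C - (1 - α) * x) * K α ≤ (C - (1 - α) * x) * K β :=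
    mul_le_mul_of_nonneg_left (hKge β hβ) hc.le
  linarith [hmono this]
end

section
/- Fix x₁ < x₂, γ ∈ (0,1), and λ ∈ (0,1]. For each integer k ≥ 1, define the k-step objective for the identity dynamics with subsidy (x₂−x₁)/k by J(k) = Σ_{t=1}^{k} γ^{t−1} · (x₂ − x₁) · ( λ/k + (1−λ)·(1 − t/k) ). Then: if γ ≤ 2 − 1/λ, J(k+1) ≤ J(k) for all k ≥ 1 (the objective is non-increasing in the number of steps, so the slow/infinitesimal intervention is optimal); and if γ ≥ 2 − 1/λ, J(k+1) ≥ J(k) for all k ≥ 1 (so the one-shot intervention k = 1 is optimal). -/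
/-- for the identity dynamics with subsidy `(x₂-x₁)/k`, the discounted k-step
objective `J(k) = Σ_{t=1}^k γ^{t-1}(x₂-x₁)(λ/k + (1-λ)(1-t/k))` is non-increasing in `k`
when `γ ≤ 2 - 1/λ` (slow intervention optimal) and non-decreasing in `k` when
`γ ≥ 2 - 1/λ` (one-shot optimal). -/
theorem identity_dynamics_one_shot_vs_slow
    (x₁ x₂ γ lam : ℝ) (h12 : x₁ < x₂) (hγ : γ ∈ Set.Ioo (0 : ℝ) 1)
    (hlam : lam ∈ Set.Ioc (0 : ℝ) 1)
    (J : ℕ → ℝ)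
    (hJ : ∀ k : ℕ, J k = ∑ t ∈ Finset.Icc 1 k,
        γ ^ (t - 1) * (x₂ - x₁) * (lam / k + (1 - lam) * (1 - (t : ℝ) / k))) :
    (γ ≤ 2 - 1 / lam → ∀ k : ℕ, 1 ≤ k → J (k + 1) ≤ J k)
    ∧ (γ ≥ 2 - 1 / lam → ∀ k : ℕ, 1 ≤ k → J (k + 1) ≥ J k) := by
  obtain ⟨hγ0, hγ1⟩ := hγ
  obtain ⟨hlam0, hlam1⟩ := hlam
  have hx : (0:ℝ) < x₂ - x₁ := sub_pos.mpr h12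
  have h1γ : (0:ℝ) < 1 - γ := by linarith
  have hlamne : lam ≠ 0 := ne_of_gt hlam0
  set S : ℕ → ℝ := fun k => ∑ t ∈ Finset.Icc 1 k, γ ^ (t - 1) with hSdef
  set U : ℕ → ℝ := fun k => ∑ t ∈ Finset.Icc 1 k, (t : ℝ) * γ ^ (t - 1) with hUdef
  set P : ℕ → ℝ := fun k => ∑ t ∈ Finset.Icc 1 k,
      γ ^ (t - 1) * (lam + (1 - lam) * ((k : ℝ) - (t : ℝ))) with hPdef
  -- U k * (1 - γ) = S k - k * γ ^ k
  have hU : ∀ k : ℕ, U k * (1 - γ) = S k - (k : ℝ) * γ ^ k := by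
    intro k
    induction k with
    | zero => simp [hUdef, hSdef]
    | succ n ih =>
      have hsU : U (n+1) = U n + ((n:ℝ)+1) * γ ^ n := by
        simp only [hUdef]
        rw [Finset.sum_Icc_succ_top (by omega : 1 ≤ n + 1)]
        simp [Nat.add_sub_cancel]
      have hsS : S (n+1) = S n + γ ^ n := by
        simp only [hSdef]
        rw [Finset.sum_Icc_succ_top (by omega : 1 ≤ n + 1)]
        simp [Nat.add_sub_cancel]
      rw [hsU, hsS]
      push_cast
      linear_combination ih
  -- S k ≥ k * γ ^ k
  have hSge : ∀ k : ℕ, (k : ℝ) * γ ^ k ≤ S k := by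
    intro k
    have hterm : ∀ t ∈ Finset.Icc 1 k, γ ^ k ≤ γ ^ (t - 1) := by
      intro t ht
      rw [Finset.mem_Icc] at ht
      exact pow_le_pow_of_le_one (le_of_lt hγ0) (le_of_lt hγ1) (by omega)
    have := Finset.card_nsmul_le_sum (Finset.Icc 1 k) (fun t => γ ^ (t-1)) (γ ^ k) hterm
    rwa [Nat.card_Icc, Nat.add_sub_cancel, nsmul_eq_mul] at this
  -- P in terms of S and U
  have hP : ∀ k : ℕ, P k = lam * S k + (1 - lam) * ((k : ℝ) * S k - U k) := by
    intro k
    simp only [hPdef, hSdef, hUdef, Finset.mul_sum, ← Finset.sum_sub_distrib,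
      ← Finset.sum_add_distrib]
    exact Finset.sum_congr rfl fun t ht => by ring
  -- recursion for P
  have hPsucc : ∀ k : ℕ, P (k+1) = P k + lam * γ ^ k + (1 - lam) * S k := by
    intro k
    simp only [hPdef, hSdef]
    have hsplit : (∑ t ∈ Finset.Icc 1 k, γ ^ (t-1) * (lam + (1-lam) * ((k:ℝ) + 1 - (t:ℝ))))
        = (∑ t ∈ Finset.Icc 1 k, γ ^ (t-1) * (lam + (1-lam) * ((k:ℝ) - (t:ℝ))))
          + (1-lam) * ∑ t ∈ Finset.Icc 1 k, γ ^ (t-1) := by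
      rw [Finset.mul_sum, ← Finset.sum_add_distrib]
      exact Finset.sum_congr rfl fun t ht => by ring
    rw [Finset.sum_Icc_succ_top (by omega : 1 ≤ k + 1)]
    simp only [Nat.add_sub_cancel]
    push_cast
    rw [hsplit]
    ring
  -- J in terms of P
  have hJP : ∀ k : ℕ, 1 ≤ k → J k = (x₂ - x₁) * P k / k := by
    intro k hk
    have hk0 : (k:ℝ) ≠ 0 := Nat.cast_ne_zero.mpr (by omega)
    have hterm : ∀ t ∈ Finset.Icc 1 k,
        γ ^ (t - 1) * (x₂ - x₁) * (lam / k + (1 - lam) * (1 - (t : ℝ) / k))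
        = (x₂ - x₁) * (γ ^ (t - 1) * (lam + (1 - lam) * ((k : ℝ) - (t : ℝ)))) / k := by
      intro t ht
      field_simp
    rw [hJ k, Finset.sum_congr rfl hterm]
    simp only [hPdef]
    rw [← Finset.sum_div, ← Finset.mul_sum]
  -- key identity
  have key : ∀ k : ℕ, 1 ≤ k →
      (J (k+1) - J k) * ((k:ℝ) * ((k:ℝ)+1) * (1-γ))
      = (x₂ - x₁) * (((k:ℝ) * γ ^ k - S k) * (2*lam - 1 - lam*γ)) := by
    intro k hk
    have hk0 : (k:ℝ) ≠ 0 := Nat.cast_ne_zero.mpr (by omega)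
    have hk10 : ((k:ℝ)+1) ≠ 0 := by positivity
    have hUval : U k = (S k - (k:ℝ) * γ ^ k) / (1 - γ) := by
      rw [eq_div_iff (ne_of_gt h1γ)]
      exact hU k
    rw [hJP (k+1) (by omega), hJP k hk, hPsucc k, hP k, hUval]
    push_cast
    field_simp
    ring
  have hSgn : ∀ k : ℕ, 1 ≤ k → (k:ℝ) * γ ^ k - S k ≤ 0 := fun k _ => by
    linarith [hSge k]
  constructor
  · intro hcond k hk
    have hc : 0 ≤ 2*lam - 1 - lam*γ := by
      have h1 : lam * γ ≤ lam * (2 - 1/lam) :=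
        mul_le_mul_of_nonneg_left hcond (le_of_lt hlam0)
      have h2 : lam * (2 - 1/lam) = 2*lam - 1 := by field_simp
      linarith
    have hrhs : (x₂ - x₁) * (((k:ℝ) * γ ^ k - S k) * (2*lam - 1 - lam*γ)) ≤ 0 :=
      mul_nonpos_of_nonneg_of_nonpos (le_of_lt hx)
        (mul_nonpos_of_nonpos_of_nonneg (hSgn k hk) hc)
    have hM : (0:ℝ) < (k:ℝ) * ((k:ℝ)+1) * (1-γ) := by
      have hk0 : (0:ℝ) < (k:ℝ) := by exact_mod_cast Nat.pos_of_ne_zero (by omega)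
      positivity
    nlinarith [key k hk]
  · intro hcond k hk
    have hc : 2*lam - 1 - lam*γ ≤ 0 := by
      have h1 : lam * (2 - 1/lam) ≤ lam * γ :=
        mul_le_mul_of_nonneg_left hcond (le_of_lt hlam0)
      have h2 : lam * (2 - 1/lam) = 2*lam - 1 := by field_simp
      linarith
    have hd : 0 ≤ ((k:ℝ) * γ ^ k - S k) * (2*lam - 1 - lam*γ) := by
      have h3 := mul_nonneg (neg_nonneg.mpr (hSgn k hk)) (neg_nonneg.mpr hc)
      rw [neg_mul_neg] at h3
      exact h3
    have hrhs : 0 ≤ (x₂ - x₁) * (((k:ℝ) * γ ^ k - S k) * (2*lam - 1 - lam*γ)) :=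
      mul_nonneg (le_of_lt hx) hd
    have hM : (0:ℝ) < (k:ℝ) * ((k:ℝ)+1) * (1-γ) := by
      have hk0 : (0:ℝ) < (k:ℝ) := by exact_mod_cast Nat.pos_of_ne_zero (by omega)
      positivity
    nlinarith [key k hk]
end

section
/- Let f : ℝ → ℝ satisfy f(y) ≤ y for all y, let c ∈ ℝ, λ ∈ (0,1], and γ ∈ [0,1] with γ ≥ 2 − 1/λ. Let n ≥ 1 and let the sequence satisfy x(t+1) = f(x(t) + c), with x(t) < x₂ for 1 ≤ t ≤ n and x(n+1) ≥ x₂ (overshooting the target at the final step is allowed). Then the discounted objective satisfies λ c Σ_{t=1}^{n} γ^{t−1} + (1−λ) Σ_{t=1}^{n−1} γ^{t−1} (x₂ − x(t+1)) ≥ λ (x₂ − x(1)). In other words, when γ ≥ 2 − 1/λ, no n-step constant-subsidy intervention beats the one-shot objective λ(x₂ − x(1)). -/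
lemma one_shot_aux (f : ℝ → ℝ) (hf : ∀ y : ℝ, f y ≤ y) (c lam γ x₂ : ℝ)
    (hlam0 : 0 < lam) (hlam1 : lam ≤ 1) (hγ0 : 0 ≤ γ)
    (hγlam : lam * γ ≥ 2 * lam - 1) :
    ∀ n : ℕ, 1 ≤ n → ∀ x : ℕ → ℝ,
      (∀ t : ℕ, 1 ≤ t → x (t + 1) = f (x t + c)) →
      (∀ t : ℕ, 1 ≤ t → t ≤ n → x t < x₂) →
      x (n + 1) ≥ x₂ →
      lam * c * (∑ i ∈ Finset.range n, γ ^ i)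
        + (1 - lam) * (∑ i ∈ Finset.range (n - 1), γ ^ i * (x₂ - x (i + 2)))
        ≥ lam * (x₂ - x 1) := by
  intro n hn
  induction n, hn using Nat.le_induction with
  | base =>
    intro x hrec hbelow hreach
    have h2 : x 2 ≤ x 1 + c := by
      have := hrec 1 le_rfl
      simpa [this] using hf (x 1 + c)
    simp only [Finset.range_one, Finset.sum_singleton, pow_zero, Nat.sub_self,
      Finset.range_zero, Finset.sum_empty, mul_zero, add_zero, mul_one]
    have : x 2 ≥ x₂ := hreach
    nlinarith
  | succ n hn IH =>
    intro x hrec hbelow hreach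
    obtain ⟨m, rfl⟩ := Nat.exists_eq_succ_of_ne_zero (by omega : n ≠ 0)
    have key := IH (fun t => x (t + 1)) (fun t ht => hrec (t + 1) (by omega))
      (fun t ht htn => hbelow (t + 1) (by omega) (by omega)) (by simpa using hreach)
    simp only [Nat.add_sub_cancel] at key ⊢
    set A := ∑ i ∈ Finset.range (m + 1), γ ^ i with hA
    set B := ∑ i ∈ Finset.range m, γ ^ i * (x₂ - x (i + 3)) with hB
    have e1 : ∑ i ∈ Finset.range (m + 1 + 1), γ ^ i = γ * A + 1 := geom_sum_succ
    have e2 : ∑ i ∈ Finset.range (m + 1), γ ^ i * (x₂ - x (i + 2))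
        = γ * B + (x₂ - x 2) := by
      rw [Finset.sum_range_succ']
      simp only [pow_zero, one_mul]
      rw [hB, Finset.mul_sum]
      congr 1
      refine Finset.sum_congr rfl fun i _ => ?_
      have : i + 1 + 2 = i + 3 := by omega
      rw [this]; ring
    rw [e1, e2]
    have h2 : x 2 ≤ x 1 + c := by
      have := hrec 1 le_rfl
      simpa [this] using hf (x 1 + c)
    have h2lt : x 2 < x₂ := hbelow 2 (by omega) (by omega)
    norm_num at key
    have h1 : γ * (lam * c * A + (1 - lam) * B - lam * (x₂ - x 2)) ≥ 0 :=
      mul_nonneg hγ0 (by linarith)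
    have h3 : (lam * γ + 1 - 2 * lam) * (x₂ - x 2) ≥ 0 :=
      mul_nonneg (by linarith) (by linarith)
    have h4 : lam * (c - x 2 + x 1) ≥ 0 := mul_nonneg hlam0.le (by linarith)
    nlinarith [h1, h3, h4]

/-- if `γ ≥ 2 - 1/λ`, then no `n`-step constant-subsidy intervention
(possibly overshooting the target at the final step) beats the one-shot objective
`λ(x₂ - x(1))`. -/
theorem one_shot_optimal_for_large_discount
    (f : ℝ → ℝ) (hf : ∀ y : ℝ, f y ≤ y)
    (c lam γ x₂ : ℝ) (hlam : lam ∈ Set.Ioc (0 : ℝ) 1) (hγ : γ ∈ Set.Icc (0 : ℝ) 1)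
    (hγlam : γ ≥ 2 - 1 / lam)
    (n : ℕ) (hn : 1 ≤ n) (x : ℕ → ℝ)
    (hrec : ∀ t : ℕ, 1 ≤ t → x (t + 1) = f (x t + c))
    (hbelow : ∀ t : ℕ, 1 ≤ t → t ≤ n → x t < x₂)
    (hreach : x (n + 1) ≥ x₂) :
    lam * c * (∑ t ∈ Finset.Icc 1 n, γ ^ (t - 1))
      + (1 - lam) * (∑ t ∈ Finset.Icc 1 (n - 1), γ ^ (t - 1) * (x₂ - x (t + 1)))
      ≥ lam * (x₂ - x 1) := by
  obtain ⟨hlam0, hlam1⟩ := hlam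
  obtain ⟨hγ0, hγ1⟩ := hγ
  have hγlam' : lam * γ ≥ 2 * lam - 1 := by
    have h := mul_le_mul_of_nonneg_left hγlam hlam0.le
    have : lam * (1 / lam) = 1 := by field_simp
    nlinarith
  have e1 : ∑ t ∈ Finset.Icc 1 n, γ ^ (t - 1) = ∑ i ∈ Finset.range n, γ ^ i := by
    rw [← Finset.Ico_add_one_right_eq_Icc, Finset.sum_Ico_eq_sum_range]
    simp
  have e2 : ∑ t ∈ Finset.Icc 1 (n - 1), γ ^ (t - 1) * (x₂ - x (t + 1))
      = ∑ i ∈ Finset.range (n - 1), γ ^ i * (x₂ - x (i + 2)) := by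
    rw [← Finset.Ico_add_one_right_eq_Icc, Finset.sum_Ico_eq_sum_range]
    have hr : n - 1 + 1 - 1 = n - 1 := by omega
    rw [hr]
    refine Finset.sum_congr rfl fun i _ => ?_
    have ha : 1 + i - 1 = i := by omega
    have hb : 1 + i + 1 = i + 2 := by omega
    rw [ha, hb]
  rw [e1, e2]
  exact one_shot_aux f hf c lam γ x₂ hlam0 hlam1 hγ0 hγlam' n hn x hrec hbelow hreach
end

section
/- Let f : ℝ → ℝ satisfy f(y) ≥ y − Δ for all y, where Δ > 0, let λ ∈ (0,1], γ ∈ [0,1), and x(1) < x₂, and suppose γ < 2 − 1/λ − Δ/(x₂ − x(1)). For ε > 0 define the infinitesimal intervention dynamics x_ε(1) = x(1), x_ε(t+1) = f(x_ε(t) + Δ + ε); then x_ε(t+1) ≥ x_ε(t) + ε, so T(ε) = min { t ≥ 1 : x_ε(t) ≥ x₂ } is finite. There exists ε₀ > 0 such that for all ε ∈ (0, ε₀), the discounted objective λ (Δ + ε) Σ_{t=1}^{T(ε)} γ^{t−1} + (1−λ) Σ_{t=1}^{T(ε)−1} γ^{t−1} (x₂ − x_ε(t+1)) is strictly less than λ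 (x₂ − x(1)). That is, if γ < 2 − 1/λ − Δ/(x₂ − x(1)), the infinitesimal intervention is better than the one-shot intervention for ε small enough. -/
/-- if `γ < 2 - 1/λ - Δ/(x₂ - x(1))`, the infinitesimal intervention
(subsidy `Δ + ε` each round) improves by at least `ε` per round, reaches `x₂` in finite
time `T(ε)`, and for all small enough `ε > 0` its discounted objective is strictly below
the one-shot objective `λ(x₂ - x(1))`. -/
theorem infinitesimal_beats_one_shot
    (f : ℝ → ℝ) (Δ lam γ x1 x₂ : ℝ) (hΔ : 0 < Δ)
    (hf : ∀ y : ℝ, f y ≥ y - Δ)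
    (hlam : lam ∈ Set.Ioc (0 : ℝ) 1) (hγ : γ ∈ Set.Ico (0 : ℝ) 1)
    (h12 : x1 < x₂)
    (hcond : γ < 2 - 1 / lam - Δ / (x₂ - x1)) :
    ∃ ε₀ > (0 : ℝ), ∀ ε : ℝ, 0 < ε → ε < ε₀ →
      ∀ xe : ℕ → ℝ, xe 1 = x1 →
        (∀ t : ℕ, 1 ≤ t → xe (t + 1) = f (xe t + Δ + ε)) →
        (∀ t : ℕ, 1 ≤ t → xe (t + 1) ≥ xe t + ε)
        ∧ ∃ T : ℕ, 1 ≤ T ∧ xe T ≥ x₂ ∧ (∀ s : ℕ, 1 ≤ s → s < T → xe s < x₂)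
            ∧ lam * (Δ + ε) * (∑ t ∈ Finset.Icc 1 T, γ ^ (t - 1))
                + (1 - lam) * (∑ t ∈ Finset.Icc 1 (T - 1), γ ^ (t - 1) * (x₂ - xe (t + 1)))
              < lam * (x₂ - x1) := by
  classical
  set D := x₂ - x1 with hDdef
  have hDpos : 0 < D := sub_pos.mpr h12
  have hDne : D ≠ 0 := ne_of_gt hDpos
  have hlampos : 0 < lam := hlam.1
  have hlamne : lam ≠ 0 := ne_of_gt hlampos
  have hlam1 : lam ≤ 1 := hlam.2
  have hγ0 : 0 ≤ γ := hγ.1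
  have hγ1 : γ < 1 := hγ.2
  have h1γ : 0 < 1 - γ := by linarith
  refine ⟨D * (2 - 1 / lam - γ) - Δ, ?_, ?_⟩
  · have h : 0 < 2 - 1 / lam - Δ / D - γ := by linarith
    have h2 : D * (Δ / D) = Δ := mul_div_cancel₀ Δ hDne
    nlinarith [mul_pos hDpos h]
  intro ε hε hεlt xe hxe1 hxef
  have hstep : ∀ t : ℕ, 1 ≤ t → xe (t + 1) ≥ xe t + ε := by
    intro t ht
    have := hf (xe t + Δ + ε)
    rw [hxef t ht]; linarith
  refine ⟨hstep, ?_⟩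
  have hgrow : ∀ n : ℕ, xe (1 + n) ≥ x1 + n * ε := by
    intro n; induction n with
    | zero => simp [hxe1]
    | succ n ih =>
      have h1 : (1 : ℕ) ≤ 1 + n := by omega
      have hs : xe (1 + (n + 1)) ≥ xe (1 + n) + ε := by
        have e : 1 + (n + 1) = (1 + n) + 1 := by omega
        rw [e]; exact hstep (1 + n) h1
      push_cast; push_cast at ih; linarith
  have hexists : ∃ t : ℕ, 1 ≤ t ∧ x₂ ≤ xe t := by
    obtain ⟨n, hn⟩ := exists_nat_ge (D / ε)
    refine ⟨1 + n, by omega, ?_⟩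
    have h2 : D ≤ n * ε := by
      rw [div_le_iff₀ hε] at hn; linarith
    have := hgrow n
    have : x1 + (n : ℝ) * ε ≥ x₂ := by
      simp only [hDdef] at h2; linarith
    linarith [hgrow n]
  set T := Nat.find hexists with hT
  have hTspec := Nat.find_spec hexists
  have hxge : ∀ s : ℕ, 1 ≤ s → x1 ≤ xe s := by
    intro s hs
    have e : s = 1 + (s - 1) := by omega
    have := hgrow (s - 1)
    rw [← e] at this
    nlinarith [this, mul_nonneg (Nat.cast_nonneg (s - 1) : (0:ℝ) ≤ (s - 1 : ℕ)) hε.le]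
  -- geometric sum bound
  have hgeom : ∀ N : ℕ, ∑ t ∈ Finset.Icc 1 N, γ ^ (t - 1) ≤ 1 / (1 - γ) := by
    intro N
    have hre : ∑ t ∈ Finset.Icc 1 N, γ ^ (t - 1) = ∑ i ∈ Finset.range N, γ ^ i := by
      rw [← Finset.Ico_add_one_right_eq_Icc, Finset.sum_Ico_eq_sum_range]; simp
    rw [hre, geom_sum_eq (ne_of_lt hγ1) N]
    have e : (γ ^ N - 1) / (γ - 1) = (1 - γ ^ N) / (1 - γ) := by
      rw [← neg_div_neg_eq]; ring_nf
    rw [e, div_le_div_iff₀ h1γ h1γ]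
    nlinarith [pow_nonneg hγ0 N]
  have hS1 := hgeom T
  have hS2 : ∑ t ∈ Finset.Icc 1 (T - 1), γ ^ (t - 1) * (x₂ - xe (t + 1))
      ≤ (1 / (1 - γ)) * D := by
    calc ∑ t ∈ Finset.Icc 1 (T - 1), γ ^ (t - 1) * (x₂ - xe (t + 1))
        ≤ ∑ t ∈ Finset.Icc 1 (T - 1), γ ^ (t - 1) * D := by
          apply Finset.sum_le_sum
          intro t ht
          have ht1 : 1 ≤ t := (Finset.mem_Icc.mp ht).1
          have hx : x1 ≤ xe (t + 1) := hxge (t + 1) (by omega)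
          have : x₂ - xe (t + 1) ≤ D := by simp only [hDdef]; linarith
          exact mul_le_mul_of_nonneg_left this (pow_nonneg hγ0 _)
      _ = (∑ t ∈ Finset.Icc 1 (T - 1), γ ^ (t - 1)) * D := by
          rw [Finset.sum_mul]
      _ ≤ (1 / (1 - γ)) * D := by
          exact mul_le_mul_of_nonneg_right (hgeom (T - 1)) hDpos.le
  have key : lam * (Δ + ε) + (1 - lam) * D < lam * D * (1 - γ) := by
    have hl : lam * (1 / lam) = 1 := mul_one_div_cancel hlamne
    have hl2 : lam * (D * (1 / lam)) = D := by
      rw [mul_comm D (1/lam), ← mul_assoc, hl, one_mul]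
    have hmul := mul_lt_mul_of_pos_left hεlt hlampos
    have expand : lam * (D * (2 - 1 / lam - γ) - Δ)
        = 2 * (lam * D) - lam * (D * (1 / lam)) - lam * D * γ - lam * Δ := by ring
    rw [expand, hl2] at hmul
    nlinarith [hmul]
  refine ⟨T, hTspec.1, hTspec.2, ?_, ?_⟩
  · intro s hs hsT
    have := Nat.find_min hexists hsT
    push_neg at this
    exact this hs
  · have hc1 : 0 ≤ lam * (Δ + ε) := by positivity
    have hc2 : 0 ≤ 1 - lam := by linarith
    have hupos : 0 < 1 / (1 - γ) := by positivity
    calc lam * (Δ + ε) * (∑ t ∈ Finset.Icc 1 T, γ ^ (t - 1))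
        + (1 - lam) * (∑ t ∈ Finset.Icc 1 (T - 1), γ ^ (t - 1) * (x₂ - xe (t + 1)))
        ≤ lam * (Δ + ε) * (1 / (1 - γ)) + (1 - lam) * ((1 / (1 - γ)) * D) :=
          add_le_add (mul_le_mul_of_nonneg_left hS1 hc1)
            (mul_le_mul_of_nonneg_left hS2 hc2)
      _ < lam * (x₂ - x1) := by
          have h := mul_lt_mul_of_pos_right key hupos
          have e : lam * D * (1 - γ) * (1 / (1 - γ)) = lam * D := by
            field_simp
          simp only [hDdef] at h e ⊢
          nlinarith [h, e]
end

section
/- Let f : ℝ → ℝ satisfy f(y) ≥ y − Δ for all y, where Δ ≥ 0, let k ≥ 1 be an integer, λ ∈ (0,1], γ ∈ [0,1), c ≥ 0, and x(1) < x₂, and suppose γ < 2 − 1/k − 1/λ − Δ/(x₂ − x(1)). Suppose the k-shot dynamics x(t+1) = f(x(t) + c) is nondecreasing (x(t+1) ≥ x(t) for 1 ≤ t ≤ k), satisfies x(t) < x₂ for 1 ≤ t ≤ k, and reaches the target exactly at step k+1: x(k+1) = x₂. Then the discounted objective λ c Σ_{t=1}^{k} γ^{t−1} + (1−λ) Σ_{t=1}^{k−1}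 γ^{t−1} (x₂ − x(t+1)) is strictly less than λ (x₂ − x(1)); that is, the k-shot intervention is better than the one-shot intervention. -/
private lemma icc_geom_eq (γ : ℝ) (n : ℕ) :
    (∑ t ∈ Finset.Icc 1 n, γ ^ (t - 1)) = ∑ i ∈ Finset.range n, γ ^ i := by
  rw [← Finset.Ico_add_one_right_eq_Icc, Finset.sum_Ico_eq_sum_range]
  exact Finset.sum_congr (by simp) (fun i _ => by simp)

private lemma icc_geom_le {γ : ℝ} (h0 : 0 ≤ γ) (h1 : γ < 1) (n : ℕ) :
    (∑ t ∈ Finset.Icc 1 n, γ ^ (t - 1)) ≤ 1 / (1 - γ) := by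
  have h1γ : 0 < 1 - γ := by linarith
  have hpow : 0 ≤ γ ^ n := pow_nonneg h0 n
  rw [icc_geom_eq, le_div_iff₀ h1γ]
  have := geom_sum_mul γ n
  linarith

/-- if `γ < 2 - 1/k - 1/λ - Δ/(x₂ - x(1))`, then a `k`-shot constant-subsidy
intervention that reaches the target `x₂` exactly at step `k+1` (nondecreasing and below
`x₂` until then) has discounted objective strictly below the one-shot objective
`λ(x₂ - x(1))`. -/
theorem k_shot_beats_one_shot
    (f : ℝ → ℝ) (Δ lam γ c x₂ : ℝ) (hΔ : 0 ≤ Δ)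
    (hf : ∀ y : ℝ, f y ≥ y - Δ)
    (k : ℕ) (hk : 1 ≤ k)
    (hlam : lam ∈ Set.Ioc (0 : ℝ) 1) (hγ : γ ∈ Set.Ico (0 : ℝ) 1) (hc : 0 ≤ c)
    (x : ℕ → ℝ) (h12 : x 1 < x₂)
    (hcond : γ < 2 - 1 / (k : ℝ) - 1 / lam - Δ / (x₂ - x 1))
    (hrec : ∀ t : ℕ, 1 ≤ t → x (t + 1) = f (x t + c))
    (hmono : ∀ t : ℕ, 1 ≤ t → t ≤ k → x (t + 1) ≥ x t)
    (hbelow : ∀ t : ℕ, 1 ≤ t → t ≤ k → x t < x₂)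
    (hreach : x (k + 1) = x₂) :
    lam * c * (∑ t ∈ Finset.Icc 1 k, γ ^ (t - 1))
      + (1 - lam) * (∑ t ∈ Finset.Icc 1 (k - 1), γ ^ (t - 1) * (x₂ - x (t + 1)))
      < lam * (x₂ - x 1) := by
  obtain ⟨hlam0, hlam1⟩ := hlam
  obtain ⟨hγ0, hγ1⟩ := hγ
  set D := x₂ - x 1 with hDdef
  have hD : 0 < D := by simp only [hDdef]; linarith
  have hkpos : (0:ℝ) < (k:ℝ) := by exact_mod_cast hk
  have h1γ : 0 < 1 - γ := by linarith
  -- each step increases by at least c - Δ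
  have hstep : ∀ t : ℕ, 1 ≤ t → x (t + 1) ≥ x t + (c - Δ) := by
    intro t ht
    have := hf (x t + c)
    rw [hrec t ht]
    linarith
  have hlin : ∀ n : ℕ, x (1 + n) ≥ x 1 + (n : ℝ) * (c - Δ) := by
    intro n
    induction n with
    | zero => simp
    | succ m ih =>
      have h := hstep (1 + m) (Nat.le_add_right 1 m)
      have e : 1 + (m + 1) = (1 + m) + 1 := rfl
      rw [e]
      push_cast
      linarith
  have hck : c ≤ D / k + Δ := by
    have h := hlin k
    rw [Nat.add_comm, hreach] at h
    rw [div_add' _ _ _ (ne_of_gt hkpos), le_div_iff₀ hkpos]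
    simp only [hDdef]
    linarith
  -- x t ≥ x 1 for 1 ≤ t ≤ k
  have hx1 : ∀ t : ℕ, 1 ≤ t → t ≤ k → x 1 ≤ x t := by
    intro t
    induction t with
    | zero => omega
    | succ m ih =>
      intro _ hmk
      by_cases hm : m = 0
      · subst hm; exact le_refl _
      · have hm1 : 1 ≤ m := Nat.one_le_iff_ne_zero.mpr hm
        exact le_trans (ih hm1 (by omega)) (hmono m hm1 (by omega))
  set S1 := ∑ t ∈ Finset.Icc 1 k, γ ^ (t - 1) with hS1def
  set S2 := ∑ t ∈ Finset.Icc 1 (k - 1), γ ^ (t - 1) * (x₂ - x (t + 1)) with hS2def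
  have hS1n : 0 ≤ S1 :=
    Finset.sum_nonneg (fun t _ => pow_nonneg hγ0 _)
  have hS1 : S1 ≤ 1 / (1 - γ) := icc_geom_le hγ0 hγ1 k
  have hS2 : S2 ≤ D * (1 / (1 - γ)) := by
    have step1 : S2 ≤ ∑ t ∈ Finset.Icc 1 (k - 1), γ ^ (t - 1) * D := by
      apply Finset.sum_le_sum
      intro t ht
      rw [Finset.mem_Icc] at ht
      have hxt : x 1 ≤ x (t + 1) := hx1 (t + 1) (by omega) (by omega)
      have : x₂ - x (t + 1) ≤ D := by simp only [hDdef]; linarith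
      exact mul_le_mul_of_nonneg_left this (pow_nonneg hγ0 _)
    have step2 : (∑ t ∈ Finset.Icc 1 (k - 1), γ ^ (t - 1) * D)
        = (∑ t ∈ Finset.Icc 1 (k - 1), γ ^ (t - 1)) * D := by
      rw [Finset.sum_mul]
    have step3 : (∑ t ∈ Finset.Icc 1 (k - 1), γ ^ (t - 1)) ≤ 1 / (1 - γ) :=
      icc_geom_le hγ0 hγ1 (k - 1)
    calc S2 ≤ (∑ t ∈ Finset.Icc 1 (k - 1), γ ^ (t - 1)) * D := by rw [← step2]; exact step1
      _ ≤ (1 / (1 - γ)) * D := mul_le_mul_of_nonneg_right step3 hD.le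
      _ = D * (1 / (1 - γ)) := by ring
  -- key algebraic inequality from hcond
  have key : lam * (D / k + Δ) + (1 - lam) * D < lam * D * (1 - γ) := by
    have hmul := mul_lt_mul_of_pos_left hcond (mul_pos hlam0 hD)
    have h1 : lam * D * (1 / lam) = D := by field_simp
    have h2 : lam * D * (Δ / D) = lam * Δ := by field_simp
    have h3 : lam * (D / k) = lam * D * (1 / (k : ℝ)) := by ring
    linarith [hmul]
  have hinv : 0 < 1 / (1 - γ) := by positivity
  have t1 : lam * c * S1 ≤ lam * ((D / k + Δ) * (1 / (1 - γ))) := by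
    have hcs : c * S1 ≤ (D / k + Δ) * (1 / (1 - γ)) :=
      mul_le_mul hck hS1 hS1n (by positivity)
    calc lam * c * S1 = lam * (c * S1) := by ring
      _ ≤ lam * ((D / k + Δ) * (1 / (1 - γ))) :=
        mul_le_mul_of_nonneg_left hcs hlam0.le
  have t2 : (1 - lam) * S2 ≤ (1 - lam) * (D * (1 / (1 - γ))) :=
    mul_le_mul_of_nonneg_left hS2 (by linarith)
  have final : lam * ((D / k + Δ) * (1 / (1 - γ))) + (1 - lam) * (D * (1 / (1 - γ)))
      < lam * D := by
    have h := mul_lt_mul_of_pos_right key hinv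
    have heq : lam * D * (1 - γ) * (1 / (1 - γ)) = lam * D := by field_simp
    linarith [h, heq]
  clear_value S1 S2 D
  linarith [t1, t2, final]
end
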